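/- For any Dynkin quiver Q = (Δ,ξ), any i ∈ I and any l ∈ ℤ, the following identity holds in the root lattice: τ_Q^l(γ_i^Q) + τ_Q^{l+1}(γ_i^Q) = Σ_{j : d(i,j)=1} (−⟨h_j, α_i⟩)·τ_Q^{l+(ξ_j−ξ_i+1)/2}(γ_j^Q). -/

import Mathlib

noncomputable section

open scoped BigOperators

/-- A finite Cartan datum: a connected Dynkin diagram of finite type with vertex set `I`,
Cartan matrix `c`, symmetrizers `d`, simple roots `α`, fundamental weights `ϖ`, an invariant
symmetric bilinear form `form` (normalized so that `(α,α) = 2` for short roots, i.e. some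
`d i = 1`), simple reflections `s` acting on the weight lattice `V`, the set of positive
roots `Φ`, the longest element `w0` (with induced involution `star`), and Coxeter number
`hcox`. -/
structure SSDatum where
  I : Type
  [fintypeI : Fintype I]
  [decEqI : DecidableEq I]
  [nonemptyI : Nonempty I]
  V : Type
  [acgV : AddCommGroup V]
  [modV : Module ℚ V]
  [decEqV : DecidableEq V]
  c : I → I → ℤ
  d : I → ℤ
  α : I → V
  ϖ : I → V
  form : V → V → ℚ
  s : I → (V ≃ₗ[ℚ] V)
  Φ : Finset V
  w0 : V ≃ₗ[ℚ] V
  star : I → I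
  hcox : ℤ
  c_diag : ∀ i, c i i = 2
  c_nonpos : ∀ i j, i ≠ j → c i j ≤ 0
  c_zero_sym : ∀ i j, c i j = 0 → c j i = 0
  connected : ∀ i j, Relation.ReflTransGen (fun a b => a ≠ b ∧ c a b ≠ 0) i j
  d_pos : ∀ i, 0 < d i
  d_one : ∃ i, d i = 1
  d_symmetrize : ∀ i j, d i * c i j = d j * c j i
  exists_basis : ∃ b : Module.Basis I ℚ V, ∀ i, b i = ϖ i
  form_symm : ∀ x y, form x y = form y x
  form_add : ∀ x y z, form (x + y) z = form x z + form y z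
  form_smul : ∀ (a : ℚ) (x y), form (a • x) y = a * form x y
  form_alpha : ∀ i j, form (α i) (α j) = (d i : ℚ) * (c i j : ℚ)
  form_alpha_omega : ∀ i j, form (α i) (ϖ j) = if i = j then (d i : ℚ) else 0
  form_inv : ∀ i x y, form (s i x) (s i y) = form x y
  s_omega : ∀ i j, s i (ϖ j) = ϖ j - (if i = j then (1 : ℚ) else 0) • α i
  s_alpha : ∀ i j, s i (α j) = α j - ((c i j : ℚ)) • α i
  alpha_mem : ∀ i, α i ∈ Φ
  zero_not_mem : (0 : V) ∉ Φ
  pos_comb : ∀ β ∈ Φ, ∃ f : I → ℕ, β = ∑ i, (f i : ℚ) • α i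
  s_perm : ∀ i, ∀ β ∈ Φ, β ≠ α i → s i β ∈ Φ
  w0_mem : w0 ∈ Subgroup.closure (Set.range s)
  w0_alpha : ∀ i, w0 (α i) = - α (star i)
  star_invol : ∀ i, star (star i) = i
  w0_neg : ∀ β ∈ Φ, -(w0 β) ∈ Φ
  hcox_pos : 0 < hcox
  hcox_card : hcox * (Fintype.card I : ℤ) = 2 * (Φ.card : ℤ)

attribute [instance] SSDatum.fintypeI SSDatum.decEqI SSDatum.nonemptyI
attribute [instance] SSDatum.acgV SSDatum.modV SSDatum.decEqV

namespace SSDatum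

variable (D : SSDatum)

/-- The underlying graph of the Dynkin diagram. -/
def graph : SimpleGraph D.I where
  Adj a b := a ≠ b ∧ D.c a b ≠ 0
  symm := by
    refine ⟨?_⟩
    intro a b h
    exact ⟨h.1.symm, fun hz => h.2 (D.c_zero_sym b a hz)⟩
  loopless := by
    refine ⟨?_⟩
    intro a h
    exact h.1 rfl

/-- The graph distance `d(i,j)` in the Dynkin diagram. -/
def dist (i j : D.I) : ℕ := D.graph.dist i j

/-- The product `s_{i_1} ⋯ s_{i_r}` of simple reflections along a word. -/
def wordProd (l : List D.I) : D.V ≃ₗ[ℚ] D.V := (l.map D.s).prod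

/-- The length of an element of the Weyl group. -/
def len (w : D.V ≃ₗ[ℚ] D.V) : ℕ :=
  sInf {n | ∃ l : List D.I, l.length = n ∧ D.wordProd l = w}

/-- A word is a reduced expression of its product. -/
def IsReducedWord (l : List D.I) : Prop := l.length = D.len (D.wordProd l)

/-- The map `ŵ` on `Φ⁺ × ℤ`:
`ŵ(β,k) = (wβ, k)` if `wβ ∈ Φ⁺` and `ŵ(β,k) = (−wβ, k−1)` otherwise. -/
def hat (w : D.V ≃ₗ[ℚ] D.V) (x : D.V × ℤ) : D.V × ℤ :=
  if w x.1 ∈ D.Φ then (w x.1, x.2) else (-(w x.1), x.2 - 1)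

/-- The map `(ŵ)⁻¹` on `Φ⁺ × ℤ`. -/
def hatInv (w : D.V ≃ₗ[ℚ] D.V) (x : D.V × ℤ) : D.V × ℤ :=
  if w⁻¹ x.1 ∈ D.Φ then (w⁻¹ x.1, x.2) else (-(w⁻¹ x.1), x.2 + 1)

/-- `ξ` is a height function on the Dynkin diagram. -/
def IsHeight (ξ : D.I → ℤ) : Prop :=
  ∀ i j, D.dist i j = 1 → ξ i - ξ j = 1 ∨ ξ j - ξ i = 1

/-- `i` is a source of the Dynkin quiver `(Δ, ξ)`. -/
def IsSource (ξ : D.I → ℤ) (i : D.I) : Prop :=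
  ∀ j, D.dist i j = 1 → ξ j < ξ i

/-- The height function of the reflected quiver `s_i Q`. -/
def rHeight (ξ : D.I → ℤ) (i : D.I) : D.I → ℤ :=
  fun j => if j = i then ξ i - 2 else ξ j

/-- A sequence in `I` is adapted to the Dynkin quiver `(Δ, ξ)`. -/
def Adapted (ξ : D.I → ℤ) : List D.I → Prop
  | [] => True
  | i :: l => D.IsSource ξ i ∧ Adapted (D.rHeight ξ i) l

/-- `τ` is the Coxeter element `τ_Q` attached to the Dynkin quiver with height function `ξ`:
it has a `Q`-adapted reduced expression in which each simple reflection occurs exactly once. -/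
def IsCoxeterFor (ξ : D.I → ℤ) (τ : D.V ≃ₗ[ℚ] D.V) : Prop :=
  ∃ l : List D.I, l.Nodup ∧ (∀ i, i ∈ l) ∧ D.Adapted ξ l ∧ D.wordProd l = τ

/-- `γ_i^Q = (1 - τ_Q) ϖ_i`. -/
def gam (τ : D.V ≃ₗ[ℚ] D.V) (i : D.I) : D.V := D.ϖ i - τ (D.ϖ i)

/-- The map `φ_Q : Δ̂₀ → Φ⁺ × ℤ`, defined inductively from
`φ_Q(i, ξ_i) = (γ_i^Q, 0)` by applying `(τ̂_Q)^{∓1}` when moving `p ↦ p ± 2`. -/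
def phi (ξ : D.I → ℤ) (τ : D.V ≃ₗ[ℚ] D.V) (i : D.I) (p : ℤ) : D.V × ℤ :=
  if p ≤ ξ i then (D.hat τ)^[((ξ i - p) / 2).toNat] (D.gam τ i, 0)
  else (D.hatInv τ)^[((p - ξ i) / 2).toNat] (D.gam τ i, 0)

/-- The function `η_{i,j}^Q : ℤ → ℚ`. -/
def eta (ξ : D.I → ℤ) (τ : D.V ≃ₗ[ℚ] D.V) (i j : D.I) (u : ℤ) : ℚ :=
  if (u + ξ j - ξ i - 1) % 2 = 0 then
    D.form (D.ϖ i) ((τ ^ ((u + ξ j - ξ i - 1) / 2)) (D.gam τ j))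
  else 0

end SSDatum

/-- The variable `t` of the field of formal Laurent series `ℚ((t))`. -/
def tq : LaurentSeries ℚ := HahnSeries.single 1 1

namespace SSDatum

variable (D : SSDatum)

/-- The symmetrized `t`-quantized Cartan matrix `B(t) = C(t) · D⁻¹`, where
`C(t)_{i,i} = t + t⁻¹` and `C(t)_{i,j} = c_{i,j}` for `i ≠ j`. -/
def Bt : Matrix D.I D.I (LaurentSeries ℚ) :=
  Matrix.of fun i j =>
    (if i = j then tq + tq⁻¹ else (D.c i j : LaurentSeries ℚ)) * ((D.d j : LaurentSeries ℚ))⁻¹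

/-- `b̃_{i,j}(u)`: the coefficient of `t^u` in the Laurent expansion of `(B(t)⁻¹)_{i,j}`. -/
def btilde (i j : D.I) (u : ℤ) : ℚ := ((D.Bt)⁻¹ i j).coeff u

/-- `Ñ(i,p;j,s) = b̃_{i,j}(p−s−1) − b̃_{i,j}(s−p−1) − b̃_{i,j}(p−s+1) + b̃_{i,j}(s−p+1)`. -/
def Ncal (i : D.I) (p : ℤ) (j : D.I) (q : ℤ) : ℚ :=
  D.btilde i j (p - q - 1) - D.btilde i j (q - p - 1)
    - D.btilde i j (p - q + 1) + D.btilde i j (q - p + 1)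

end SSDatum

/-!
Write `τ = s_{l₁} ⋯ s_{lₙ}` for a `Q`-adapted word `l = p ++ i :: q` and let `w_p` be the product
over the prefix `p`. Then `γ_i = w_p α_i` and `α_i = 2ϖ_i + ∑_j c_{j,i} ϖ_j` over the neighbours `j`
of `i`. Since sources are reflected first, a neighbour `j` lies in `p` exactly when
`ξ_j = ξ_i + 1`, and then `w_p ϖ_j = τ ϖ_j`; otherwise `w_p ϖ_j = ϖ_j`. Hence
`γ_i = 2ϖ_i + ∑_j c_{j,i} τ^{e_j} ϖ_j` with `e_j = (ξ_j - ξ_i + 1)/2 ∈ {0, 1}`, and applying `1 - τ`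
together with `γ_j = (1 - τ) ϖ_j` gives `(1 + τ) γ_i = ∑_j (-c_{j,i}) τ^{e_j} γ_j`. Applying `τ^l`
gives the general case.
-/

namespace SSDatum

variable (D : SSDatum)

lemma dist_eq_one_iff {i j : D.I} : D.dist i j = 1 ↔ i ≠ j ∧ D.c i j ≠ 0 :=
  SimpleGraph.dist_eq_one_iff_adj

lemma alpha_ne_zero (i : D.I) : D.α i ≠ 0 :=
  fun h => D.zero_not_mem (h ▸ D.alpha_mem i)

section RootsInWeights

variable {D} (b : Module.Basis D.I ℚ D.V)

lemma s_apply_eq_sub_coord_smul_alpha (hb : ∀ i, b i = D.ϖ i) (j : D.I) (x : D.V) :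
    D.s j x = x - b.coord j x • D.α j := by
  have h : (D.s j : D.V →ₗ[ℚ] D.V) = LinearMap.id - (b.coord j).smulRight (D.α j) :=
    b.ext fun k => by
      change D.s j (b k) = b k - b.coord j (b k) • D.α j
      rw [b.coord_apply, b.repr_self, Finsupp.single_apply, hb, D.s_omega]
      simp only [eq_comm]
  exact LinearMap.congr_fun h x

lemma coord_alpha (hb : ∀ i, b i = D.ϖ i) (i j : D.I) : b.coord j (D.α i) = D.c j i := by
  have h := (D.s_alpha j i).symm.trans (s_apply_eq_sub_coord_smul_alpha b hb j (D.α i))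
  exact (smul_left_injective ℚ (D.alpha_ne_zero j) (sub_right_injective h)).symm

end RootsInWeights

lemma alpha_eq_sum_smul_omega (i : D.I) : D.α i = ∑ j, D.c j i • D.ϖ j := by
  obtain ⟨b, hb⟩ := D.exists_basis
  conv_lhs => rw [← b.sum_repr (D.α i)]
  refine Finset.sum_congr rfl fun j _ => ?_
  rw [hb, ← b.coord_apply, coord_alpha b hb, Int.cast_smul_eq_zsmul]

lemma alpha_eq_two_smul_add_sum_adj (i : D.I) :
    D.α i = (2 : ℤ) • D.ϖ i +
      ∑ j ∈ Finset.univ.filter (fun j => D.dist i j = 1), D.c j i • D.ϖ j := by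
  rw [D.alpha_eq_sum_smul_omega, ← Finset.add_sum_erase _ _ (Finset.mem_univ i), D.c_diag]
  have hi : ¬ D.dist i i = 1 := by simp [dist]
  rw [← Finset.sum_filter_of_ne (p := fun j => D.dist i j = 1), Finset.filter_erase,
    Finset.erase_eq_of_notMem (by simpa using hi)]
  intro j hj hne
  refine D.dist_eq_one_iff.2 ⟨(Finset.ne_of_mem_erase hj).symm, fun hc => hne ?_⟩
  rw [D.c_zero_sym i j hc, zero_smul]

lemma wordProd_cons (i : D.I) (l : List D.I) :
    D.wordProd (i :: l) = D.s i * D.wordProd l := by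
  simp [wordProd]

lemma wordProd_append (p q : List D.I) :
    D.wordProd (p ++ q) = D.wordProd p * D.wordProd q := by
  simp [wordProd]

lemma wordProd_apply_omega_of_notMem {l : List D.I} {j : D.I} (hj : j ∉ l) :
    D.wordProd l (D.ϖ j) = D.ϖ j := by
  induction l with
  | nil => rfl
  | cons a l ih =>
    rw [List.mem_cons, not_or] at hj
    rw [wordProd_cons, LinearEquiv.mul_apply, ih hj.2, D.s_omega, if_neg (Ne.symm hj.1),
      zero_smul, sub_zero]

lemma wordProd_append_apply_omega_of_notMem (p : List D.I) {r : List D.I} {j : D.I}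
    (hj : j ∉ r) : D.wordProd (p ++ r) (D.ϖ j) = D.wordProd p (D.ϖ j) := by
  rw [wordProd_append, LinearEquiv.mul_apply, D.wordProd_apply_omega_of_notMem hj]

lemma gam_wordProd {p q : List D.I} {j : D.I} (hnd : (p ++ j :: q).Nodup) :
    D.gam (D.wordProd (p ++ j :: q)) j = D.wordProd p (D.α j) := by
  have hjp : j ∉ p := fun h => List.disjoint_of_nodup_append hnd h List.mem_cons_self
  have hjq : j ∉ q := (List.nodup_cons.mp (List.nodup_append.mp hnd).2.1).1
  rw [gam, wordProd_append, LinearEquiv.mul_apply, wordProd_cons, LinearEquiv.mul_apply,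
    D.wordProd_apply_omega_of_notMem hjq, D.s_omega, if_pos rfl, one_smul, map_sub,
    D.wordProd_apply_omega_of_notMem hjp, sub_sub_cancel]

lemma foldl_rHeight_apply (ξ : D.I → ℤ) (p : List D.I) (k : D.I) :
    p.foldl D.rHeight ξ k = ξ k - 2 * p.count k := by
  induction p generalizing ξ with
  | nil => simp
  | cons a p ih =>
    rw [List.foldl_cons, ih, List.count_cons]
    by_cases h : k = a
    · subst h
      simp only [rHeight, ↓reduceIte, BEq.rfl, Nat.cast_add, Nat.cast_one]
      ring
    · simp [rHeight, h, Ne.symm h]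

lemma adapted_of_append {ξ : D.I → ℤ} {p r : List D.I} (h : D.Adapted ξ (p ++ r)) :
    D.Adapted (p.foldl D.rHeight ξ) r := by
  induction p generalizing ξ with
  | nil => exact h
  | cons a p ih => exact ih h.2

lemma height_lt_of_adapted {ξ : D.I → ℤ} {p q : List D.I} {j k : D.I}
    (had : D.Adapted ξ (p ++ j :: q)) (hjp : j ∉ p) (hkp : k ∉ p) (hjk : D.dist j k = 1) :
    ξ k < ξ j := by
  have h := (D.adapted_of_append had).1 k hjk
  rwa [D.foldl_rHeight_apply, D.foldl_rHeight_apply, List.count_eq_zero_of_not_mem hjp,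
    List.count_eq_zero_of_not_mem hkp, Nat.cast_zero, mul_zero, sub_zero, sub_zero] at h

lemma mem_prefix_iff_height_eq_add_one {ξ : D.I → ℤ} (hξ : D.IsHeight ξ) {p q : List D.I}
    {i j : D.I} (had : D.Adapted ξ (p ++ i :: q)) (hnd : (p ++ i :: q).Nodup)
    (hij : D.dist i j = 1) : j ∈ p ↔ ξ j = ξ i + 1 := by
  have hip : i ∉ p := fun h => List.disjoint_of_nodup_append hnd h List.mem_cons_self
  constructor
  · intro hjp
    obtain ⟨p₁, p₂, rfl⟩ := List.append_of_mem hjp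
    have hnd' : (p₁ ++ j :: (p₂ ++ i :: q)).Nodup := by simpa using hnd
    have had' : D.Adapted ξ (p₁ ++ j :: (p₂ ++ i :: q)) := by simpa using had
    have hjp₁ : j ∉ p₁ := fun h => List.disjoint_of_nodup_append hnd' h List.mem_cons_self
    have hji : D.dist j i = 1 := by rwa [dist, SimpleGraph.dist_comm]
    have := D.height_lt_of_adapted had' hjp₁ (fun h => hip (List.mem_append_left _ h)) hji
    rcases hξ i j hij with h | h <;> omega
  · intro hj
    by_contra hjp
    have := D.height_lt_of_adapted had hip hjp hij
    omega

lemma wordProd_prefix_apply_omega {ξ : D.I → ℤ} (hξ : D.IsHeight ξ) {p q : List D.I}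
    {i j : D.I} (had : D.Adapted ξ (p ++ i :: q)) (hnd : (p ++ i :: q).Nodup)
    (hij : D.dist i j = 1) :
    D.wordProd p (D.ϖ j) = (D.wordProd (p ++ i :: q) ^ ((ξ j - ξ i + 1) / 2)) (D.ϖ j) := by
  have hiff := D.mem_prefix_iff_height_eq_add_one hξ had hnd hij
  by_cases hjp : j ∈ p
  · have hji : j ∉ i :: q := fun h => List.disjoint_of_nodup_append hnd hjp h
    have hξj := hiff.mp hjp
    rw [show (ξ j - ξ i + 1) / 2 = 1 by omega, zpow_one,
      D.wordProd_append_apply_omega_of_notMem p hji]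
  · have hξj : ξ j ≠ ξ i + 1 := hiff.not.mp hjp
    have hheight := hξ i j hij
    rw [show (ξ j - ξ i + 1) / 2 = 0 by omega, zpow_zero, LinearEquiv.coe_one, id,
      D.wordProd_apply_omega_of_notMem hjp]

lemma gam_eq_two_smul_add_sum {ξ : D.I → ℤ} (hξ : D.IsHeight ξ) {τ : D.V ≃ₗ[ℚ] D.V}
    (hτ : D.IsCoxeterFor ξ τ) (i : D.I) :
    D.gam τ i = (2 : ℤ) • D.ϖ i + ∑ j ∈ Finset.univ.filter (fun j => D.dist i j = 1),
      D.c j i • (τ ^ ((ξ j - ξ i + 1) / 2)) (D.ϖ j) := by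
  obtain ⟨l, hnd, hall, had, rfl⟩ := hτ
  obtain ⟨p, q, rfl⟩ := List.append_of_mem (hall i)
  have hip : i ∉ p := fun h => List.disjoint_of_nodup_append hnd h List.mem_cons_self
  rw [D.gam_wordProd hnd, D.alpha_eq_two_smul_add_sum_adj, map_add, map_zsmul, map_sum,
    D.wordProd_apply_omega_of_notMem hip]
  congr 1
  refine Finset.sum_congr rfl fun j hj => ?_
  rw [map_zsmul, D.wordProd_prefix_apply_omega hξ had hnd (Finset.mem_filter.mp hj).2]

lemma gam_add_apply_gam {ξ : D.I → ℤ} (hξ : D.IsHeight ξ) {τ : D.V ≃ₗ[ℚ] D.V}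
    (hτ : D.IsCoxeterFor ξ τ) (i : D.I) :
    D.gam τ i + τ (D.gam τ i) = ∑ j ∈ Finset.univ.filter (fun j => D.dist i j = 1),
      (-(D.c j i)) • (τ ^ ((ξ j - ξ i + 1) / 2)) (D.gam τ j) := by
  have hcomm : ∀ (e : ℤ) (x : D.V), (τ ^ e) (τ x) = τ ((τ ^ e) x) := fun e x =>
    LinearEquiv.congr_fun (Commute.self_zpow τ e).eq.symm x
  have hrhs : ∑ j ∈ Finset.univ.filter (fun j => D.dist i j = 1),
        (-(D.c j i)) • (τ ^ ((ξ j - ξ i + 1) / 2)) (D.gam τ j) =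
      τ (D.gam τ i - (2 : ℤ) • D.ϖ i) - (D.gam τ i - (2 : ℤ) • D.ϖ i) := by
    rw [← eq_sub_of_add_eq' (D.gam_eq_two_smul_add_sum hξ hτ i).symm, map_sum,
      ← Finset.sum_sub_distrib]
    refine Finset.sum_congr rfl fun j _ => ?_
    rw [gam, map_sub, hcomm, map_zsmul]
    module
  rw [hrhs]
  simp only [gam, map_sub, map_zsmul]
  module

end SSDatum

/-- (`Δ̂`-additive property) For any Dynkin quiver `Q = (Δ,ξ)`, any `i ∈ I`
and any `l ∈ ℤ`:
`τ_Q^l(γ_i^Q) + τ_Q^{l+1}(γ_i^Q) = Σ_{j : d(i,j)=1} (−⟨h_j, α_i⟩)·τ_Q^{l+(ξ_j−ξ_i+1)/2}(γ_j^Q)`. -/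
theorem stmt9 (D : SSDatum) (ξ : D.I → ℤ) (hξ : D.IsHeight ξ)
    (τ : D.V ≃ₗ[ℚ] D.V) (hτ : D.IsCoxeterFor ξ τ)
    (i : D.I) (l : ℤ) :
    (τ ^ l) (D.gam τ i) + (τ ^ (l + 1)) (D.gam τ i) =
      ∑ j ∈ Finset.univ.filter (fun j => D.dist i j = 1),
        (-(D.c j i)) • (τ ^ (l + (ξ j - ξ i + 1) / 2)) (D.gam τ j) := by
  have hpow : ∀ (m : ℤ) (x : D.V), (τ ^ (l + m)) x = (τ ^ l) ((τ ^ m) x) := fun m x => by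
    rw [zpow_add, LinearEquiv.mul_apply]
  rw [hpow 1, zpow_one, ← map_add, D.gam_add_apply_gam hξ hτ i, map_sum]
  simp only [map_zsmul, hpow]
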